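/- arXiv:1402.1921 — 2 statements merged into one kernel-verified Lean document; each statement's English description precedes it below -/
import Mathlib

section
/- Perturbation bound at y* for the hybrid loss (corrected inequality (11) in the proof of Theorem 1): In the perturbation setup, for every α ∈ [0,1], ℓ_α(p,y*) − ℓ_α(q,y*) > ε·(2−α)/(p y* + ε). -/
open Real

/-- The maximum of `p` over all labels different from `y`
(as a supremum, which for a finite nonempty label set equals the maximum). -/
noncomputable def maxNe {Y : Type*} (p : Y → ℝ) (y : Y) : ℝ :=
  sSup {x : ℝ | ∃ y' : Y, y' ≠ y ∧ p y' = x}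

/-- The multiclass hinge loss of a (strictly positive) distribution `p` at label `y`. -/
noncomputable def hingeLoss {Y : Type*} (p : Y → ℝ) (y : Y) : ℝ :=
  max 0 (1 - Real.log (p y / maxNe p y))

/-- The log loss of a (strictly positive) distribution `p` at label `y`. -/
noncomputable def logLoss {Y : Type*} (p : Y → ℝ) (y : Y) : ℝ :=
  - Real.log (p y)

/-- The hybrid loss with mixture parameter `α`. -/
noncomputable def hybridLoss {Y : Type*} (α : ℝ) (p : Y → ℝ) (y : Y) : ℝ :=
  α * logLoss p y + (1 - α) * hingeLoss p y

/-- The conditional risk `L_α(p, D) = ∑ y, D y * ℓ_α(p, y)`. -/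
noncomputable def condRisk {Y : Type*} [Fintype Y] (α : ℝ) (p D : Y → ℝ) : ℝ :=
  ∑ y, D y * hybridLoss α p y

/-- `D` is a distribution over `Y`. -/
def IsDist {Y : Type*} [Fintype Y] (D : Y → ℝ) : Prop :=
  (∀ y, 0 ≤ D y) ∧ ∑ y, D y = 1

/-- `p` is a strictly positive distribution over `Y`. -/
def IsPosDist {Y : Type*} [Fintype Y] (p : Y → ℝ) : Prop :=
  (∀ y, 0 < p y) ∧ ∑ y, p y = 1

/-
At `y*` the perturbation raises the probability of the true label from `a = p y*` to `a + ε`,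
while the runner-up `t` drops from `a` to `a - ε`. The log loss therefore falls by
`log ((a + ε) / a)`, and the hinge loss falls from `1` to `max 0 (1 - log ((a + ε) / (a - ε)))`,
i.e. by `min 1 (log ((a + ε) / (a - ε)))`. The strict bound `(x - y) / x < log (x / y)` for
`0 < y < x` turns these into `ε / (a + ε)` and `2ε / (a + ε)`, and the hybrid loss mixes the
two decrements with weights `α` and `1 - α`.
-/

lemma maxNe_eq_of_forall_le {Y : Type*} {f : Y → ℝ} {y y₁ : Y} (hy₁ : y₁ ≠ y)
    (hle : ∀ y', y' ≠ y₁ → y' ≠ y → f y' ≤ f y₁) : maxNe f y = f y₁ := by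
  refine IsGreatest.csSup_eq ⟨⟨y₁, hy₁, rfl⟩, ?_⟩
  rintro x ⟨y', hy', rfl⟩
  by_cases h : y' = y₁
  · rw [h]
  · exact hle y' h hy'

lemma one_sub_hingeLoss {Y : Type*} (p : Y → ℝ) (y : Y) :
    1 - hingeLoss p y = min 1 (log (p y / maxNe p y)) := by
  rw [hingeLoss, ← min_sub_sub_left, sub_zero, sub_sub_cancel]

lemma hingeLoss_eq_one_of_maxNe_eq {Y : Type*} {p : Y → ℝ} {y : Y} (hy : 0 < p y)
    (hmax : maxNe p y = p y) : hingeLoss p y = 1 := by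
  rw [hingeLoss, hmax, div_self hy.ne', log_one, sub_zero, max_eq_right zero_le_one]

lemma logLoss_sub_logLoss {Y : Type*} {p q : Y → ℝ} {y : Y} (hp : 0 < p y) (hq : 0 < q y) :
    logLoss p y - logLoss q y = log (q y / p y) := by
  rw [logLoss, logLoss, log_div hq.ne' hp.ne']
  ring

lemma sub_div_lt_log_div {x y : ℝ} (hy : 0 < y) (hyx : y < x) : (x - y) / x < log (x / y) := by
  have hx : 0 < x := hy.trans hyx
  have h := log_lt_sub_one_of_pos (div_pos hy hx) (div_lt_one hx |>.mpr hyx).ne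
  have h' : log (y / x) = -log (x / y) := by rw [← log_inv, inv_div]
  have h'' : (x - y) / x = -(y / x - 1) := by field_simp; ring
  linarith

lemma convex_comb_lt_convex_comb {a b c d α : ℝ} (hab : a < b) (hcd : c < d)
    (hα₀ : 0 ≤ α) (hα₁ : α ≤ 1) : α * a + (1 - α) * c < α * b + (1 - α) * d := by
  rcases hα₁.lt_or_eq with hα₁ | rfl
  · nlinarith [mul_nonneg hα₀ (sub_nonneg.mpr hab.le),
      mul_pos (sub_pos.mpr hα₁) (sub_pos.mpr hcd)]
  · simpa using hab

theorem perturbation_bound_hybrid_at_ystar_general {Y : Type*}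
    (p : Y → ℝ)
    (t ystar : Y) (hne : t ≠ ystar) (hpt : p t = p ystar)
    (hlt : ∀ y, y ≠ t → y ≠ ystar → p y < p t)
    (ε : ℝ) (hε0 : 0 < ε) (hεpt : ε < p t)
    (hεlt : ∀ y, y ≠ t → y ≠ ystar → p y < p t - ε)
    (q : Y → ℝ) (hqstar : q ystar = p ystar + ε) (hqt : q t = p t - ε)
    (hq : ∀ y, y ≠ t → y ≠ ystar → q y = p y)
    (α : ℝ) (hα : α ∈ Set.Icc (0 : ℝ) 1) :
    ε * (2 - α) / (p ystar + ε) < hybridLoss α p ystar - hybridLoss α q ystar := by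
  have ha : 0 < p ystar := hpt ▸ hε0.trans hεpt
  have hs : 0 < p ystar + ε := by linarith
  have hmaxp : maxNe p ystar = p ystar :=
    (maxNe_eq_of_forall_le hne fun y h₁ h₂ => (hlt y h₁ h₂).le).trans hpt
  have hmaxq : maxNe q ystar = p ystar - ε := by
    refine (maxNe_eq_of_forall_le hne fun y h₁ h₂ => ?_).trans (hqt.trans (by rw [hpt]))
    exact (hq y h₁ h₂ ▸ hqt ▸ hεlt y h₁ h₂).le
  have hlog : ε / (p ystar + ε) < logLoss p ystar - logLoss q ystar := by
    rw [logLoss_sub_logLoss ha (hqstar ▸ hs), hqstar]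
    simpa only [add_sub_cancel_left] using sub_div_lt_log_div ha (lt_add_of_pos_right _ hε0)
  have hhinge : 2 * ε / (p ystar + ε) < hingeLoss p ystar - hingeLoss q ystar := by
    rw [hingeLoss_eq_one_of_maxNe_eq ha hmaxp, one_sub_hingeLoss, hmaxq, hqstar, lt_min_iff,
      div_lt_one hs]
    refine ⟨by linarith, ?_⟩
    have h := sub_div_lt_log_div (x := p ystar + ε) (sub_pos.mpr (hpt ▸ hεpt)) (by linarith)
    rwa [show p ystar + ε - (p ystar - ε) = 2 * ε by ring] at h
  calc ε * (2 - α) / (p ystar + ε)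
      = α * (ε / (p ystar + ε)) + (1 - α) * (2 * ε / (p ystar + ε)) := by field_simp; ring
    _ < α * (logLoss p ystar - logLoss q ystar)
          + (1 - α) * (hingeLoss p ystar - hingeLoss q ystar) :=
      convex_comb_lt_convex_comb hlog hhinge hα.1 hα.2
    _ = hybridLoss α p ystar - hybridLoss α q ystar := by simp only [hybridLoss]; ring

/-- Perturbation bound at y* for the hybrid loss (corrected inequality (11)). -/
theorem perturbation_bound_hybrid_at_ystar {Y : Type*} [Fintype Y]
    (hcard : 1 < Fintype.card Y)
(p : Y → ℝ) (hp : IsPosDist p)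
    (t ystar : Y) (hne : t ≠ ystar) (hpt : p t = p ystar)
    (hlt : ∀ y, y ≠ t → y ≠ ystar → p y < p t)
    (ε : ℝ) (hε0 : 0 < ε) (hεpt : ε < p t)
    (hεlt : ∀ y, y ≠ t → y ≠ ystar → p y < p t - ε)
    (q : Y → ℝ) (hqstar : q ystar = p ystar + ε) (hqt : q t = p t - ε)
    (hq : ∀ y, y ≠ t → y ≠ ystar → q y = p y)
    (α : ℝ) (hα : α ∈ Set.Icc (0 : ℝ) 1) :
    ε * (2 - α) / (p ystar + ε) < hybridLoss α p ystar - hybridLoss α q ystar :=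
  perturbation_bound_hybrid_at_ystar_general p t ystar hne hpt hlt ε hε0 hεpt hεlt q hqstar hqt hq α
    hα
end

section
/- Perturbation bound at t for the hybrid loss (corrected inequality (12) in the proof of Theorem 1): In the perturbation setup, for every α ∈ [0,1], ℓ_α(p,t) − ℓ_α(q,t) > −ε·(2−α)/(p y* − ε). -/
open Real

/- Both hinge losses at `t` are computed exactly: `p t` ties with `p y*`, so `ℓ_H(p,t) = 1`, while
`q y* = p t + ε` is the largest competitor of `q t = p t - ε`. The difference of hybrid losses is then
`α log((a-ε)/a) + (1-α) log((a-ε)/(a+ε))` with `a = p t`, and `log x > 1 - 1/x` bounds the two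
logarithms strictly below by `-ε/(a-ε)` and `-2ε/(a-ε)`. -/

section Losses

variable {Y : Type*}

lemma maxNe_eq_of_forall_le_s10 {p : Y → ℝ} {y y₀ : Y} (hy₀ : y₀ ≠ y)
    (hle : ∀ y', y' ≠ y → p y' ≤ p y₀) : maxNe p y = p y₀ :=
  IsGreatest.csSup_eq ⟨⟨y₀, hy₀, rfl⟩, by rintro _ ⟨y', hy', rfl⟩; exact hle y' hy'⟩

lemma hingeLoss_eq_one_sub_log {p : Y → ℝ} {y : Y} (hpos : 0 < p y) (hle : p y ≤ maxNe p y) :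
    hingeLoss p y = 1 - log (p y / maxNe p y) := by
  have hmax : 0 < maxNe p y := hpos.trans_le hle
  have hlog : log (p y / maxNe p y) ≤ 0 :=
    log_nonpos (div_nonneg hpos.le hmax.le) (div_le_one_of_le₀ hle hmax.le)
  exact max_eq_right (by linarith)

lemma hybridLoss_sub_hybridLoss (α : ℝ) {p q : Y → ℝ} {y : Y}
    (hp : 0 < p y) (hpmax : p y ≤ maxNe p y) (hq : 0 < q y) (hqmax : q y ≤ maxNe q y) :
    hybridLoss α p y - hybridLoss α q y
      = α * log (q y / p y) + (1 - α) * (log (q y / maxNe q y) - log (p y / maxNe p y)) := by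
  rw [hybridLoss, hybridLoss, logLoss, logLoss, hingeLoss_eq_one_sub_log hp hpmax,
    hingeLoss_eq_one_sub_log hq hqmax, log_div hq.ne' hp.ne']
  ring

end Losses

lemma one_sub_div_lt_log_div {x y : ℝ} (hx : 0 < x) (hy : 0 < y) (hxy : x ≠ y) :
    1 - y / x < log (x / y) := by
  have h := log_lt_sub_one_of_pos (div_pos hy hx) (div_ne_one_of_ne hxy.symm)
  rw [← inv_div y x, log_inv]
  linarith

lemma convex_combination_lt_convex_combination {α x y x' y' : ℝ} (hα : α ∈ Set.Icc (0 : ℝ) 1)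
    (hx : x < x') (hy : y < y') : α * x + (1 - α) * y < α * x' + (1 - α) * y' := by
  rcases hα.2.eq_or_lt with rfl | hα1
  · linarith
  · linarith [mul_le_mul_of_nonneg_left hx.le hα.1, mul_lt_mul_of_pos_left hy (sub_pos.2 hα1)]

theorem perturbation_bound_hybrid_at_t_general {Y : Type*}
    (p : Y → ℝ)
    (t ystar : Y) (hne : t ≠ ystar) (hpt : p t = p ystar)
    (ε : ℝ) (hε0 : 0 < ε) (hεpt : ε < p t)
    (hεlt : ∀ y, y ≠ t → y ≠ ystar → p y < p t - ε)
    (q : Y → ℝ) (hqstar : q ystar = p ystar + ε) (hqt : q t = p t - ε)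
    (hq : ∀ y, y ≠ t → y ≠ ystar → q y = p y)
    (α : ℝ) (hα : α ∈ Set.Icc (0 : ℝ) 1) :
    -(ε * (2 - α)) / (p ystar - ε) < hybridLoss α p t - hybridLoss α q t := by
  have hmax_p : maxNe p t = p t := by
    refine hpt ▸ maxNe_eq_of_forall_le_s10 hne.symm fun y hyt => ?_
    by_cases hys : y = ystar
    · rw [hys]
    · linarith [hεlt y hyt hys]
  have hmax_q : maxNe q t = p t + ε := by
    refine hpt ▸ hqstar ▸ maxNe_eq_of_forall_le_s10 hne.symm fun y hyt => ?_
    by_cases hys : y = ystar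
    · rw [hys]
    · linarith [hq y hyt hys, hεlt y hyt hys]
  have hpos : 0 < p t := hε0.trans hεpt
  have hgap : 0 < p t - ε := sub_pos.2 hεpt
  rw [hybridLoss_sub_hybridLoss α hpos hmax_p.ge (hqt ▸ hgap) (by linarith),
    hmax_p, hmax_q, hqt, div_self hpos.ne', log_one, sub_zero, ← hpt]
  calc -(ε * (2 - α)) / (p t - ε)
      = α * (1 - p t / (p t - ε)) + (1 - α) * (1 - (p t + ε) / (p t - ε)) := by
        field_simp
        ring
    _ < α * log ((p t - ε) / p t) + (1 - α) * log ((p t - ε) / (p t + ε)) :=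
        convex_combination_lt_convex_combination hα
          (one_sub_div_lt_log_div hgap hpos (by linarith))
          (one_sub_div_lt_log_div hgap (by linarith) (by linarith))

/-- Perturbation bound at t for the hybrid loss (corrected inequality (12)). -/
theorem perturbation_bound_hybrid_at_t {Y : Type*} [Fintype Y]
    (hcard : 1 < Fintype.card Y)
(p : Y → ℝ) (hp : IsPosDist p)
    (t ystar : Y) (hne : t ≠ ystar) (hpt : p t = p ystar)
    (hlt : ∀ y, y ≠ t → y ≠ ystar → p y < p t)
    (ε : ℝ) (hε0 : 0 < ε) (hεpt : ε < p t)
    (hεlt : ∀ y, y ≠ t → y ≠ ystar → p y < p t - ε)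
    (q : Y → ℝ) (hqstar : q ystar = p ystar + ε) (hqt : q t = p t - ε)
    (hq : ∀ y, y ≠ t → y ≠ ystar → q y = p y)
    (α : ℝ) (hα : α ∈ Set.Icc (0 : ℝ) 1) :
    -(ε * (2 - α)) / (p ystar - ε) < hybridLoss α p t - hybridLoss α q t :=
  perturbation_bound_hybrid_at_t_general p t ystar hne hpt ε hε0 hεpt hεlt q hqstar hqt hq α hα
end
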